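/- arXiv:2503.18449 — 7 statements merged into one kernel-verified Lean document; each statement's English description precedes it below -/
import Mathlib

section
/- Let k be a field of characteristic 0, V a finite-dimensional k-vector space and φ : V → V a linear endomorphism. Then in the ring of formal power series k[[T]] one has exp(∑_{n≥1} (tr(φ^n)/n)·T^n) = (det(1 − T·φ))^{-1}, where det(1 − T·φ) denotes the reverse characteristic polynomial of φ, regarded as an element of k[[T]]. -/
/-!
Let `M` be a matrix of `φ`, `g = ∑_{n ≥ 1} tr(Mⁿ)/n · Tⁿ` and `P = det (1 - T • M)`. Both
`exp g` and `P⁻¹` have constant term `1`, so it suffices that `(exp g · P)' = 0`. Since `psExp g`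
is the substitution of `g` into `exp`, the chain rule gives `(exp g)' = g' · exp g`, where
`g' = ∑ tr(M^(n+1)) Tⁿ`. Jacobi's formula `D (det A) = tr (adj A · D A)`, applied to
`A = 1 - T • M`, whose adjugate is `det A · ∑ Mⁿ Tⁿ`, gives `P' = -g' · P`.
-/

open PowerSeries

/-- The exponential of a formal power series (with zero constant term) over a field of
characteristic zero, defined coefficientwise: the `n`-th coefficient of `exp f` is
`∑_{m ≤ n} coeff n (f^m) / m!` (for `f` of positive order only the terms `m ≤ n` contribute). -/
noncomputable def psExp (k : Type) [Field k] (f : PowerSeries k) : PowerSeries k :=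
  PowerSeries.mk fun n =>
    ∑ m ∈ Finset.range (n + 1), ((Nat.factorial m : k))⁻¹ * PowerSeries.coeff (R := k) n (f ^ m)

section Exp

variable {k : Type} [Field k]

theorem PowerSeries.coeff_pow_eq_zero_of_lt {R : Type*} [CommSemiring R] {g : R⟦X⟧}
    (hg : constantCoeff g = 0) {n m : ℕ} (h : n < m) : coeff n (g ^ m) = 0 :=
  coeff_of_lt_order n ((Nat.cast_lt.mpr h).trans_le (le_order_pow_of_constantCoeff_eq_zero m hg))

theorem psExp_eq_subst_exp [CharZero k] {g : k⟦X⟧} (hg : constantCoeff g = 0) :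
    psExp k g = (exp k).subst g := by
  ext n
  rw [psExp, coeff_mk, coeff_subst' (.of_constantCoeff_zero' hg),
    finsum_eq_sum_of_support_subset _ (s := Finset.range (n + 1)) ?_]
  · refine Finset.sum_congr rfl fun m _ => ?_
    simp [coeff_exp]
  · intro m hm
    rw [Function.mem_support] at hm
    rw [Finset.coe_range, Set.mem_Iio]
    by_contra! h
    exact hm (by rw [coeff_pow_eq_zero_of_lt hg (by omega), smul_zero])

theorem derivative_psExp [CharZero k] {g : k⟦X⟧} (hg : constantCoeff g = 0) :
    d⁄dX k (psExp k g) = psExp k g * d⁄dX k g := by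
  rw [psExp_eq_subst_exp hg, derivative_subst (.of_constantCoeff_zero' hg), derivative_exp]

theorem constantCoeff_psExp (g : k⟦X⟧) : constantCoeff (psExp k g) = 1 := by
  rw [← coeff_zero_eq_constantCoeff_apply, psExp, coeff_mk]
  simp

theorem psExp_eq_inv_of_derivative_eq [CharZero k] {g P : k⟦X⟧} (hg : constantCoeff g = 0)
    (hP : constantCoeff P = 1) (h : d⁄dX k P = -(d⁄dX k g * P)) : psExp k g = P⁻¹ := by
  rw [PowerSeries.eq_inv_iff_mul_eq_one (by simp [hP])]
  refine derivative.ext ?_ (by simp [constantCoeff_psExp, hP])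
  rw [Derivation.leibniz, smul_eq_mul, smul_eq_mul, h, derivative_psExp hg,
    Derivation.map_one_eq_zero]
  ring

theorem derivative_mk_inv_natCast_mul [CharZero k] (a : ℕ → k) :
    d⁄dX k (mk fun n => if n = 0 then 0 else (n : k)⁻¹ * a n) = mk fun n => a (n + 1) := by
  ext n
  rw [coeff_derivative, coeff_mk, coeff_mk, if_neg n.succ_ne_zero]
  field_simp
  push_cast
  ring

end Exp

open Finset Matrix

theorem Derivation.leibniz_prod {R A M ι : Type*} [CommSemiring R] [CommSemiring A]
    [AddCommMonoid M] [Algebra R A] [Module A M] [Module R M] [DecidableEq ι]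
    (D : Derivation R A M) (s : Finset ι) (f : ι → A) :
    D (∏ i ∈ s, f i) = ∑ i ∈ s, (∏ j ∈ s.erase i, f j) • D (f i) := by
  induction s using Finset.induction with
  | empty => simp
  | insert a s ha ih =>
    rw [prod_insert ha, leibniz, ih, smul_sum, sum_insert ha, erase_insert ha, add_comm]
    congr 1
    refine sum_congr rfl fun i hi => ?_
    rw [erase_insert_of_ne (ne_of_mem_of_not_mem hi ha).symm, prod_insert (mt mem_of_mem_erase ha),
      mul_smul]

theorem Derivation.map_det_eq_sum_det_updateCol {R A ι : Type*} [CommRing R] [CommRing A]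
    [Algebra R A] [Fintype ι] [DecidableEq ι] (D : Derivation R A A) (B : Matrix ι ι A) :
    D B.det = ∑ j, (B.updateCol j fun i => D (B i j)).det := by
  simp only [det_apply, map_sum, Units.smul_def, map_zsmul, leibniz_prod, smul_sum]
  rw [sum_comm]
  refine sum_congr rfl fun j _ => sum_congr rfl fun σ _ => ?_
  rw [← mul_prod_erase univ _ (mem_univ j), updateCol_self, smul_eq_mul, mul_comm]
  congr 2
  exact prod_congr rfl fun i hi => by rw [updateCol_ne (ne_of_mem_erase hi)]

theorem Derivation.map_det {R A ι : Type*} [CommRing R] [CommRing A]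
    [Algebra R A] [Fintype ι] [DecidableEq ι] (D : Derivation R A A) (B : Matrix ι ι A) :
    D B.det = trace (B.adjugate * B.map D) := by
  rw [map_det_eq_sum_det_updateCol, trace]
  refine sum_congr rfl fun j _ => ?_
  rw [← cramer_apply, cramer_eq_adjugate_mulVec, diag_apply, mul_apply, mulVec, dotProduct]
  rfl

namespace Matrix

variable {R ι : Type*} [CommRing R] [Fintype ι] [DecidableEq ι]

noncomputable def geomSeries (M : Matrix ι ι R) : Matrix ι ι R⟦X⟧ :=
  of fun i j => mk fun n => (M ^ n) i j

theorem geomSeries_eq_one_add (M : Matrix ι ι R) :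
    M.geomSeries = 1 + (X : R⟦X⟧) • (M.map C * M.geomSeries) := by
  ext i j (_ | n)
  · by_cases h : i = j <;> simp [geomSeries, h]
  · simp [geomSeries, one_apply, apply_ite, pow_succ', mul_apply, map_sum, coeff_succ_X_mul]

theorem one_sub_X_smul_mul_geomSeries (M : Matrix ι ι R) :
    (1 - (X : R⟦X⟧) • M.map C) * M.geomSeries = 1 := by
  rw [sub_mul, one_mul, smul_mul_assoc, sub_eq_iff_eq_add, ← geomSeries_eq_one_add]

theorem coe_charpolyRev (M : Matrix ι ι R) :
    (M.charpolyRev : R⟦X⟧) = (1 - (X : R⟦X⟧) • M.map C).det := by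
  rw [charpolyRev, ← Polynomial.coeToPowerSeries.ringHom_apply, RingHom.map_det,
    RingHom.mapMatrix_apply]
  congr 1
  ext i j : 1
  by_cases h : i = j <;> simp [h, (commute_X _).eq]

theorem trace_geomSeries_mul (M : Matrix ι ι R) :
    trace (M.geomSeries * M.map C) = mk fun n => trace (M ^ (n + 1)) := by
  ext n
  simp [trace, mul_apply, geomSeries, pow_succ, map_sum]

theorem derivative_charpolyRev (M : Matrix ι ι R) :
    d⁄dX R (M.charpolyRev : R⟦X⟧) = -(mk (fun n => trace (M ^ (n + 1))) * M.charpolyRev) := by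
  set A : Matrix ι ι R⟦X⟧ := 1 - (X : R⟦X⟧) • M.map C
  have hadj : A.adjugate = A.det • M.geomSeries := by
    rw [← mul_one A.adjugate, ← one_sub_X_smul_mul_geomSeries M, ← mul_assoc, adjugate_mul,
      smul_mul, one_mul]
  have hDA : A.map (d⁄dX R) = -M.map C := by
    ext i j : 1
    by_cases h : i = j <;> simp [A, h]
  rw [coe_charpolyRev, Derivation.map_det, hadj, hDA, smul_mul, mul_neg, trace_smul, trace_neg,
    trace_geomSeries_mul, smul_neg, smul_eq_mul, mul_comm]

end Matrix

theorem psExp_eq_inv_charpolyRev {k : Type} {ι : Type*} [Field k] [CharZero k] [Fintype ι] [DecidableEq ι]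
    (M : Matrix ι ι k) :
    psExp k (mk fun n => if n = 0 then 0 else (n : k)⁻¹ * trace (M ^ n)) =
      (M.charpolyRev : k⟦X⟧)⁻¹ := by
  refine psExp_eq_inv_of_derivative_eq (by simp) ?_ ?_
  · rw [Polynomial.constantCoeff_coe, Polynomial.coeff_zero_eq_eval_zero, eval_charpolyRev]
  · rw [derivative_mk_inv_natCast_mul, derivative_charpolyRev]

/-- for a linear endomorphism `φ` of a finite-dimensional vector space `V` over a
field `k` of characteristic zero, `exp (∑_{n ≥ 1} tr(φ^n)/n · T^n) = det(1 - T·φ)⁻¹` in `k[[T]]`,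
where `det(1 - T·φ)` is the reverse characteristic polynomial of `φ`. -/
theorem stmt_0 (k V : Type) [Field k] [CharZero k] [AddCommGroup V] [Module k V]
    [FiniteDimensional k V] (φ : V →ₗ[k] V) :
    psExp k (PowerSeries.mk fun n =>
        if n = 0 then 0 else (n : k)⁻¹ * LinearMap.trace k V (φ ^ n)) =
      (((LinearMap.charpoly φ).reverse : PowerSeries k))⁻¹ := by
  let b := Module.finBasis k V
  have htrace (n : ℕ) : LinearMap.trace k V (φ ^ n) = trace (LinearMap.toMatrix b b φ ^ n) := by
    rw [LinearMap.trace_eq_matrix_trace k b]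
    exact congrArg trace (map_pow (LinearMap.toMatrixAlgEquiv b) φ n)
  simp_rw [htrace, ← LinearMap.charpoly_toMatrix φ b, reverse_charpoly]
  exact psExp_eq_inv_charpolyRev _
end

section
/- Let k be a field of characteristic 0, V a finite-dimensional k-vector space and φ an endomorphism of V. Then ∑_{n≥0} tr(Sym^n φ)·T^n = (det(1 − T·φ))^{-1} in k[[T]], where Sym^n φ is the induced endomorphism of the n-th symmetric power of V. -/
open PowerSeries PiTensorProduct

open scoped TensorProduct

/-- The submodule of relations defining the `n`-th symmetric power as a quotient of the
`n`-th tensor power: it is spanned by the elements `v₁ ⊗ ⋯ ⊗ vₙ - v_{σ(1)} ⊗ ⋯ ⊗ v_{σ(n)}`. -/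
noncomputable def symRel (k : Type) [Field k] (n : ℕ) (V : Type) [AddCommGroup V]
    [Module k V] : Submodule k (⨂[k] (_ : Fin n), V) :=
  Submodule.span k
    {x | ∃ (σ : Equiv.Perm (Fin n)) (v : Fin n → V),
      x = PiTensorProduct.tprod k v - PiTensorProduct.tprod k (v ∘ σ)}

/-- The `n`-th symmetric power of `V`, as the quotient of the `n`-th tensor power by the
symmetrization relations. -/
noncomputable def SymPow (k : Type) [Field k] (n : ℕ) (V : Type) [AddCommGroup V]
    [Module k V] : Type :=
  (⨂[k] (_ : Fin n), V) ⧸ symRel k n V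

noncomputable instance (k : Type) [Field k] (n : ℕ) (V : Type) [AddCommGroup V] [Module k V] :
    AddCommGroup (SymPow k n V) :=
  inferInstanceAs (AddCommGroup ((⨂[k] (_ : Fin n), V) ⧸ symRel k n V))

noncomputable instance (k : Type) [Field k] (n : ℕ) (V : Type) [AddCommGroup V] [Module k V] :
    Module k (SymPow k n V) :=
  inferInstanceAs (Module k ((⨂[k] (_ : Fin n), V) ⧸ symRel k n V))

/-- The endomorphism `Sym^n φ` of the `n`-th symmetric power induced functorially by `φ`. -/
noncomputable def symPowMap (k : Type) [Field k] (n : ℕ) (V : Type) [AddCommGroup V]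
    [Module k V] (φ : V →ₗ[k] V) : SymPow k n V →ₗ[k] SymPow k n V :=
  Submodule.mapQ (symRel k n V) (symRel k n V)
    (PiTensorProduct.map fun _ : Fin n => φ)
    (by
      rw [symRel, Submodule.span_le]
      rintro x ⟨σ, v, rfl⟩
      simp only [SetLike.mem_coe, Submodule.mem_comap, map_sub, PiTensorProduct.map_tprod]
      exact Submodule.subset_span ⟨σ, fun i => φ (v i), rfl⟩)

/-!
Fix a basis `b` of `V`. The images in `Sym^n V` of the tensors `b (s 1) ⊗ ⋯ ⊗ b (s n)` with `s`
monotone form a basis indexed by multisets of size `n`, and in this basis the matrix of `Sym^n φ`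
is a polynomial expression `Matrix.symPow n` in the matrix of `φ`. The identity is therefore one
between polynomials in the entries of the matrix of `φ`, and may be checked over an algebraic
closure, where `φ` is lower triangular in a suitable basis. If `φ` is lower triangular with
diagonal `λ₁, …, λ_d`, the diagonal entries of the matrix of `Sym^n φ` are the monomials of degree
`n` in the `λᵢ`, so `∑ tr(Sym^n φ) Tⁿ = ∏ᵢ (1 - λᵢ T)⁻¹ = det(1 - T φ)⁻¹`.
-/

namespace Sym

variable {α : Type*} {n : ℕ}

def ofFn (f : Fin n → α) : Sym α n := ⟨List.ofFn f, by simp⟩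

lemma ofFn_comp_perm (f : Fin n → α) (σ : Equiv.Perm (Fin n)) : ofFn (f ∘ σ) = ofFn f :=
  Subtype.ext (Quotient.sound (σ.ofFn_comp_perm f))

lemma ofFn_injOn_monotone [PartialOrder α] :
    Set.InjOn (ofFn (α := α) (n := n)) {f | Monotone f} :=
  fun _ hf _ hg h => List.ofFn_injective <|
    (Quotient.exact (congrArg Subtype.val h)).eq_of_pairwise'
      hf.sortedLE_ofFn.pairwise hg.sortedLE_ofFn.pairwise

variable [LinearOrder α]

def sortedTuple (m : Sym α n) : Fin n → α :=
  fun i => (m.1.sort).get (i.cast (by simp))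

lemma monotone_sortedTuple (m : Sym α n) : Monotone m.sortedTuple :=
  fun _ _ hij => List.Pairwise.rel_get_of_le (Multiset.pairwise_sort _ _) hij

lemma ofFn_sortedTuple (m : Sym α n) : ofFn m.sortedTuple = m := by
  refine Subtype.ext ?_
  change ((List.ofFn fun i => (m.1.sort).get (i.cast _) : List α) : Multiset α) = m.1
  rw [← List.ofFn_congr (by simp), List.ofFn_get, Multiset.sort_eq]

lemma sortedTuple_ofFn (f : Fin n → α) : (ofFn f).sortedTuple = f ∘ Tuple.sort f := by
  rw [← ofFn_comp_perm f (Tuple.sort f)]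
  exact ofFn_injOn_monotone (monotone_sortedTuple _) (Tuple.monotone_sort f) (ofFn_sortedTuple _)

end Sym

namespace SymPow

variable {k : Type} [Field k] {V : Type} [AddCommGroup V] [Module k V] {n d : ℕ}

noncomputable def mk : (⨂[k] (_ : Fin n), V) →ₗ[k] SymPow k n V := (symRel k n V).mkQ

lemma mk_tprod_comp_perm (v : Fin n → V) (σ : Equiv.Perm (Fin n)) :
    mk (PiTensorProduct.tprod k (v ∘ σ)) = mk (PiTensorProduct.tprod k v) :=
  (Submodule.Quotient.eq _).mpr <| by
    simpa using (symRel k n V).neg_mem (Submodule.subset_span ⟨σ, v, rfl⟩)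

lemma symPowMap_mk (φ : V →ₗ[k] V) (x : ⨂[k] (_ : Fin n), V) :
    symPowMap k n V φ (mk x) = mk (PiTensorProduct.map (fun _ => φ) x) :=
  rfl

variable (b : Module.Basis (Fin d) k V)

lemma ext_basis {M : Type*} [AddCommGroup M] [Module k M] {f f' : SymPow k n V →ₗ[k] M}
    (h : ∀ g : Fin n → Fin d,
      f (mk (PiTensorProduct.tprod k (b ∘ g))) = f' (mk (PiTensorProduct.tprod k (b ∘ g)))) :
    f = f' :=
  Submodule.linearMap_qext (symRel k n V) <| (Basis.piTensorProduct fun _ => b).ext fun g => by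
    rw [Basis.piTensorProduct_apply]
    exact h g

noncomputable def tensorCoord : (⨂[k] (_ : Fin n), V) →ₗ[k] Sym (Fin d) n →₀ k :=
  Finsupp.lmapDomain k k Sym.ofFn ∘ₗ (Basis.piTensorProduct fun _ => b).repr.toLinearMap

lemma tensorCoord_tprod_comp_perm (v : Fin n → V) (σ : Equiv.Perm (Fin n)) :
    tensorCoord b (PiTensorProduct.tprod k (v ∘ σ)) =
      tensorCoord b (PiTensorProduct.tprod k v) := by
  have hrepr : (Basis.piTensorProduct fun _ => b).repr (PiTensorProduct.tprod k (v ∘ σ)) =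
      Finsupp.equivMapDomain (σ.symm.arrowCongr (Equiv.refl _))
        ((Basis.piTensorProduct fun _ => b).repr (PiTensorProduct.tprod k v)) := by
    ext g
    simp only [Basis.piTensorProduct_repr_tprod_apply, Finsupp.equivMapDomain_apply]
    simpa using Equiv.prod_comp σ fun i => b.repr (v i) (g (σ.symm i))
  simp only [tensorCoord, LinearMap.coe_comp, Function.comp_apply, LinearEquiv.coe_coe, hrepr,
    Finsupp.lmapDomain_apply, Finsupp.equivMapDomain_eq_mapDomain, ← Finsupp.mapDomain_comp]
  congr 1
  funext g
  exact Sym.ofFn_comp_perm g σ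

lemma tensorCoord_tprod_basis (g : Fin n → Fin d) :
    tensorCoord b (PiTensorProduct.tprod k (b ∘ g)) = Finsupp.single (Sym.ofFn g) 1 := by
  rw [tensorCoord, LinearMap.comp_apply, LinearEquiv.coe_coe, Function.comp_def,
    ← Basis.piTensorProduct_apply, Module.Basis.repr_self, Finsupp.lmapDomain_apply,
    Finsupp.mapDomain_single]

noncomputable def coord : SymPow k n V →ₗ[k] Sym (Fin d) n →₀ k :=
  (symRel k n V).liftQ (tensorCoord b) <| Submodule.span_le.mpr <| by
    rintro _ ⟨σ, v, rfl⟩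
    simp [tensorCoord_tprod_comp_perm]

lemma coord_mk (x : ⨂[k] (_ : Fin n), V) : coord b (mk x) = tensorCoord b x := rfl

noncomputable def monomial (m : Sym (Fin d) n) : SymPow k n V :=
  mk (PiTensorProduct.tprod k (b ∘ m.sortedTuple))

lemma mk_tprod_basis (g : Fin n → Fin d) :
    mk (PiTensorProduct.tprod k (b ∘ g)) = monomial b (Sym.ofFn g) := by
  rw [monomial, Sym.sortedTuple_ofFn, ← Function.comp_assoc, mk_tprod_comp_perm]

lemma coord_monomial (m : Sym (Fin d) n) : coord b (monomial b m) = Finsupp.single m 1 := by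
  rw [monomial, coord_mk, tensorCoord_tprod_basis, Sym.ofFn_sortedTuple]

noncomputable def basis : Module.Basis (Sym (Fin d) n) k (SymPow k n V) :=
  .ofRepr <| .ofLinearMap (coord b) (Finsupp.linearCombination k (monomial b))
    (Finsupp.lhom_ext' fun m => LinearMap.ext_ring <| by simp [coord_monomial])
    (ext_basis b fun g => by simp [mk_tprod_basis, coord_monomial])

lemma basis_apply (m : Sym (Fin d) n) : basis b m = monomial b m := by
  simp [basis, Module.Basis.coe_ofRepr]

lemma basis_repr_apply (x : SymPow k n V) : (basis b).repr x = coord b x := rfl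

end SymPow

lemma Finsupp.mapDomain_apply_eq_sum_filter {α β M : Type*} [Fintype α] [DecidableEq β]
    [AddCommMonoid M] (f : α → β) (x : α →₀ M) (y : β) :
    x.mapDomain f y = ∑ a with f a = y, x a := by
  simp [Finsupp.mapDomain, Finsupp.sum_fintype, Finsupp.single_apply, Finset.sum_ite]

lemma Fin.comp_perm_eq_of_le {n d : ℕ} {f : Fin n → Fin d} {σ : Equiv.Perm (Fin n)}
    (h : ∀ i, f (σ i) ≤ f i) : f ∘ σ = f := by
  have hsum : ∑ i, (f (σ i) : ℕ) = ∑ i, (f i : ℕ) := Equiv.sum_comp σ fun i => (f i : ℕ)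
  funext i
  exact Fin.ext <| (Finset.sum_eq_sum_iff_of_le fun i _ => Fin.le_iff_val_le_val.1 (h i)).1 hsum i
    (Finset.mem_univ i)

namespace Matrix

variable {R : Type*} [CommSemiring R] {d n : ℕ}

/-- The matrix of `Sym^n A` in the basis `SymPow.basis` (see `SymPow.toMatrix_symPowMap`). -/
def symPow (n : ℕ) (A : Matrix (Fin d) (Fin d) R) : Matrix (Sym (Fin d) n) (Sym (Fin d) n) R :=
  fun m' m => ∑ g with Sym.ofFn g = m', ∏ i, A (g i) (m.sortedTuple i)

lemma symPow_map {S : Type*} [CommSemiring S] (f : R →+* S) (A : Matrix (Fin d) (Fin d) R) :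
    (A.map f).symPow n = (A.symPow n).map f := by
  ext
  simp [symPow, map_sum, map_prod]

lemma IsLowerTriangular.symPow_apply_self {A : Matrix (Fin d) (Fin d) R}
    (hA : A.IsLowerTriangular) (m : Sym (Fin d) n) :
    A.symPow n m m = ((m : Multiset (Fin d)).map fun i => A i i).prod := by
  rw [symPow, Finset.sum_eq_single_of_mem m.sortedTuple (by simp [Sym.ofFn_sortedTuple])]
  · conv_rhs => rw [← Sym.ofFn_sortedTuple m]
    simp [Sym.ofFn, List.prod_ofFn]
  · intro g hg hne
    -- a rearrangement of `g` dominated by `g` pointwise is `g` itself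
    obtain ⟨i, hi⟩ : ∃ i, g i < m.sortedTuple i := by
      rw [← (Finset.mem_filter.1 hg).2, Sym.sortedTuple_ofFn] at hne ⊢
      by_contra! hle
      exact hne (Fin.comp_perm_eq_of_le hle).symm
    exact Finset.prod_eq_zero (Finset.mem_univ i) (hA hi)

end Matrix

namespace SymPow

variable {k : Type} [Field k] {V : Type} [AddCommGroup V] [Module k V] {n d : ℕ}

lemma toMatrix_symPowMap (b : Module.Basis (Fin d) k V) (φ : V →ₗ[k] V) :
    LinearMap.toMatrix (basis b) (basis b) (symPowMap k n V φ) =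
      (LinearMap.toMatrix b b φ).symPow n := by
  ext m' m
  rw [LinearMap.toMatrix_apply, basis_repr_apply, basis_apply, monomial, symPowMap_mk,
    PiTensorProduct.map_tprod, coord_mk, tensorCoord, LinearMap.comp_apply, LinearEquiv.coe_coe,
    Finsupp.lmapDomain_apply, Finsupp.mapDomain_apply_eq_sum_filter]
  simp [Matrix.symPow, Basis.piTensorProduct_repr_tprod_apply, LinearMap.toMatrix_apply]

lemma trace_symPowMap (b : Module.Basis (Fin d) k V) (φ : V →ₗ[k] V) :
    LinearMap.trace k (SymPow k n V) (symPowMap k n V φ) =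
      ((LinearMap.toMatrix b b φ).symPow n).trace := by
  rw [LinearMap.trace_eq_matrix_trace k (basis b), toMatrix_symPowMap]

end SymPow

namespace Matrix

variable {R : Type*} [CommRing R] {ι : Type*} [Fintype ι]

lemma charpolyRev_map [DecidableEq ι] {S : Type*} [CommRing S] (f : R →+* S)
    (A : Matrix ι ι R) :
    (A.map f).charpolyRev = A.charpolyRev.map f := by
  rw [charpolyRev, charpolyRev, ← Polynomial.coe_mapRingHom, RingHom.map_det]
  congr 1
  ext i j
  by_cases h : i = j <;> simp [h]

lemma IsLowerTriangular.charpolyRev_eq_prod [LinearOrder ι] {A : Matrix ι ι R}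
    (hA : A.IsLowerTriangular) :
    A.charpolyRev = ∏ i, (1 - Polynomial.C (A i i) * Polynomial.X) := by
  have htri : (1 - (Polynomial.X : Polynomial R) • A.map Polynomial.C).IsLowerTriangular :=
    fun i j hij => by simp [one_apply_ne (ne_of_lt (show i < j from hij)), hA hij]
  rw [charpolyRev, det_of_isLowerTriangular _ htri]
  refine Finset.prod_congr rfl fun i _ => ?_
  simp only [sub_apply, one_apply_eq, smul_apply, map_apply, smul_eq_mul]
  ring

end Matrix

lemma Polynomial.coe_map {R S : Type*} [CommSemiring R] [CommSemiring S] (f : R →+* S)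
    (p : Polynomial R) : ((p.map f : Polynomial S) : PowerSeries S) = PowerSeries.map f p := by
  ext n
  simp [Polynomial.coeff_coe]

namespace PowerSeries

variable {R : Type*} [CommRing R]

lemma one_sub_C_mul_X_mul_mk_pow (a : R) : (1 - C a * X) * mk (a ^ ·) = 1 := by
  have h := congrArg (rescale a) (mk_one_mul_one_sub_eq_one R)
  rw [map_mul, rescale_mk, map_sub, map_one, rescale_X] at h
  simpa [mul_comm] using h

lemma mk_sum_sym_eq_prod {ι : Type*} [Fintype ι] [DecidableEq ι] (a : ι → R) :
    mk (fun n => ∑ m : Sym ι n, ((m : Multiset ι).map a).prod) = ∏ i, mk (a i ^ ·) := by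
  ext n
  let e : Sym ι n ≃ Finset.finsuppAntidiag (Finset.univ : Finset ι) n :=
    (Sym.equivNatSum ι n).trans <| Equiv.subtypeEquivRight fun P => by
      simp [Finset.mem_finsuppAntidiag, Finsupp.sum_fintype]
  rw [coeff_mk, coeff_prod, ← Finset.sum_coe_sort (Finset.finsuppAntidiag _ _), ← e.sum_comp]
  refine Fintype.sum_congr _ _ fun m => ?_
  simp only [e, Equiv.trans_apply, Equiv.subtypeEquivRight_apply_coe,
    Sym.coe_equivNatSum_apply_apply, coeff_mk, Finset.prod_multiset_map_count]
  exact Finset.prod_subset (Finset.subset_univ _) fun i _ hi => by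
    rw [Multiset.count_eq_zero.2 (by simpa using hi), pow_zero]

end PowerSeries

lemma Module.Basis.mkFinCons_repr_coe {R M : Type*} [Ring R] [AddCommGroup M] [Module R M]
    {n : ℕ} {N : Submodule R M} (y : M) (c : Module.Basis (Fin n) R N)
    (hli : ∀ (a : R), ∀ x ∈ N, a • y + x = 0 → a = 0) (hsp : ∀ z : M, ∃ a : R, z + a • y ∈ N)
    (x : N) : ⇑((mkFinCons y c hli hsp).repr x) = Fin.cons 0 (c.repr x) := by
  have hx : (x : M) =
      ∑ i, (Fin.cons 0 (c.repr x) : Fin (n + 1) → R) i • mkFinCons y c hli hsp i := by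
    simp only [Fin.sum_univ_succ, coe_mkFinCons, Fin.cons_zero, Fin.cons_succ, zero_smul,
      zero_add, Function.comp_apply]
    conv_lhs => rw [← c.sum_repr x]
    simp only [Submodule.coe_sum, Submodule.coe_smul]
  rw [hx, repr_sum_self]

/-- An eigenvector `ξ` of the dual map gives the `φ`-invariant hyperplane `ker ξ`; put any
`y ∉ ker ξ` in front of a triangularizing basis of `ker ξ`. -/
theorem Module.End.exists_basis_isLowerTriangular_toMatrix {K : Type*} [Field K] [IsAlgClosed K]
    (d : ℕ) {V : Type*} [AddCommGroup V] [Module K V] [FiniteDimensional K V]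
    (hd : Module.finrank K V = d) (φ : V →ₗ[K] V) :
    ∃ b : Module.Basis (Fin d) K V, (LinearMap.toMatrix b b φ).IsLowerTriangular := by
  induction d generalizing V with
  | zero => exact ⟨Module.finBasisOfFinrankEq K V hd, fun i => i.elim0⟩
  | succ d ih =>
    have : Nontrivial V := Module.nontrivial_of_finrank_pos (R := K) (by omega)
    obtain ⟨μ, hμ⟩ := Module.End.exists_eigenvalue φ.dualMap
    obtain ⟨ξ, hξ, hξ0⟩ := hμ.exists_hasEigenvector
    have hξφ : ∀ x, ξ (φ x) = μ * ξ x := fun x =>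
      LinearMap.congr_fun (Module.End.mem_eigenspace_iff.mp hξ) x
    have hinv : ∀ x ∈ LinearMap.ker ξ, φ x ∈ LinearMap.ker ξ := fun x hx => by
      rw [LinearMap.mem_ker] at hx ⊢
      rw [hξφ, hx, mul_zero]
    obtain ⟨c, hc⟩ := ih (V := LinearMap.ker ξ)
      (by have := Module.Dual.finrank_ker_add_one_of_ne_zero hξ0; omega) (φ.restrict hinv)
    obtain ⟨y, hy⟩ : ∃ y, ξ y ≠ 0 := by simpa [DFunLike.ne_iff] using hξ0
    let b := Module.Basis.mkFinCons y c
      (fun a x hx h => by simpa [hy, LinearMap.mem_ker.mp hx] using congrArg ξ h)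
      (fun z => ⟨-(ξ z / ξ y), by simp [hy]⟩)
    refine ⟨b, fun i j (hij : i < j) => ?_⟩
    induction j using Fin.cases with
    | zero => exact absurd hij (Fin.not_lt_zero i)
    | succ j =>
      have hφ : φ (b j.succ) = (φ.restrict hinv (c j) : V) := by simp [b]
      rw [LinearMap.toMatrix_apply, hφ, Module.Basis.mkFinCons_repr_coe]
      induction i using Fin.cases with
      | zero => rfl
      | succ i => simpa [LinearMap.toMatrix_apply] using hc (Fin.succ_lt_succ_iff.mp hij)

namespace Matrix

variable {d : ℕ}

theorem mk_trace_symPow_mul_charpolyRev_of_isAlgClosed {K : Type} [Field K] [IsAlgClosed K]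
    (A : Matrix (Fin d) (Fin d) K) :
    mk (fun n => (A.symPow n).trace) * (A.charpolyRev : K⟦X⟧) = 1 := by
  obtain ⟨b, hb⟩ :=
    Module.End.exists_basis_isLowerTriangular_toMatrix d (Module.finrank_fin_fun K) A.toLin'
  have hA : LinearMap.toMatrix (Pi.basisFun K (Fin d)) (Pi.basisFun K (Fin d)) A.toLin' = A := by
    rw [LinearMap.toMatrix_eq_toMatrix', LinearMap.toMatrix'_toLin']
  set B := LinearMap.toMatrix b b A.toLin'
  have htrace : ∀ n, (A.symPow n).trace =
      ∑ m : Sym (Fin d) n, ((m : Multiset (Fin d)).map fun i => B i i).prod := fun n => by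
    rw [← hA, ← SymPow.trace_symPowMap, SymPow.trace_symPowMap b]
    exact Finset.sum_congr rfl fun m _ => hb.symPow_apply_self m
  have hcharpoly : A.charpolyRev = B.charpolyRev := by
    rw [← reverse_charpoly, ← reverse_charpoly, LinearMap.charpoly_toMatrix,
      ← LinearMap.charpoly_toMatrix A.toLin' (Pi.basisFun K (Fin d)), hA]
  simp_rw [htrace, hcharpoly, hb.charpolyRev_eq_prod, PowerSeries.mk_sum_sym_eq_prod]
  rw [← Polynomial.coeToPowerSeries.ringHom_apply, map_prod, ← Finset.prod_mul_distrib]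
  refine Finset.prod_eq_one fun i _ => ?_
  rw [Polynomial.coeToPowerSeries.ringHom_apply, Polynomial.coe_sub, Polynomial.coe_one,
    Polynomial.coe_mul, Polynomial.coe_C, Polynomial.coe_X, mul_comm]
  exact PowerSeries.one_sub_C_mul_X_mul_mk_pow (B i i)

/-- Both sides are polynomial in the entries of `A`, so it suffices to check the identity over an
algebraic closure. -/
theorem mk_trace_symPow_mul_charpolyRev {K : Type} [Field K] (A : Matrix (Fin d) (Fin d) K) :
    mk (fun n => (A.symPow n).trace) * (A.charpolyRev : K⟦X⟧) = 1 := by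
  let f := algebraMap K (AlgebraicClosure K)
  apply PowerSeries.map_injective f f.injective
  rw [map_mul, map_one, ← Polynomial.coe_map, ← charpolyRev_map]
  convert mk_trace_symPow_mul_charpolyRev_of_isAlgClosed (A.map f) using 2
  ext n
  simp [symPow_map, AddMonoidHom.map_trace]

end Matrix

theorem stmt_2_general (k V : Type) [Field k] [AddCommGroup V] [Module k V]
    [FiniteDimensional k V] (φ : V →ₗ[k] V) :
    (PowerSeries.mk fun n => LinearMap.trace k (SymPow k n V) (symPowMap k n V φ)) =
      (((LinearMap.charpoly φ).reverse : PowerSeries k))⁻¹ := by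
  let b := Module.finBasis k V
  have hcharpoly : φ.charpoly.reverse = (LinearMap.toMatrix b b φ).charpolyRev := by
    rw [← LinearMap.charpoly_toMatrix φ b, Matrix.reverse_charpoly]
  have hconst : constantCoeff (φ.charpoly.reverse : k⟦X⟧) ≠ 0 := by
    simp [hcharpoly, Polynomial.coeff_zero_eq_eval_zero]
  rw [PowerSeries.eq_inv_iff_mul_eq_one hconst, hcharpoly]
  simp_rw [SymPow.trace_symPowMap b]
  exact Matrix.mk_trace_symPow_mul_charpolyRev _

/-- `∑_{n≥0} tr(Sym^n φ) Tⁿ = det(1 - T·φ)⁻¹` in `k[[T]]`, where `det(1 - T·φ)` is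
the reverse characteristic polynomial of `φ`. -/
theorem stmt_2 (k V : Type) [Field k] [CharZero k] [AddCommGroup V] [Module k V]
    [FiniteDimensional k V] (φ : V →ₗ[k] V) :
    (PowerSeries.mk fun n => LinearMap.trace k (SymPow k n V) (symPowMap k n V φ)) =
      (((LinearMap.charpoly φ).reverse : PowerSeries k))⁻¹ :=
  stmt_2_general k V φ
end

section
/- Let k be a field, V a finite-dimensional k-vector space of dimension m, and φ an endomorphism of V. Then ∑_{n=0}^{m} tr(Λ^n φ)·T^n = det(1 + T·φ) in k[T], where Λ^n φ is the induced endomorphism of the n-th exterior power of V. -/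
/-! In the basis of `⋀^n V` given by wedges of basis vectors of `V`, the diagonal entries of
`Λ^n φ` are the `n × n` principal minors of the matrix of `φ`, so `tr (Λ^n φ)` is their sum. By
multilinearity of the determinant in the rows, the same sum is the coefficient of `T^n` in
`det (1 + T • φ)`. -/

open Polynomial

/-- The endomorphism `Λ^n φ` of the `n`-th exterior power induced by `φ`, obtained by
restricting the induced algebra endomorphism of the exterior algebra. -/
noncomputable def extPowMap (k : Type) [Field k] (V : Type) [AddCommGroup V] [Module k V]
    (n : ℕ) (φ : V →ₗ[k] V) : ⋀[k]^n V →ₗ[k] ⋀[k]^n V :=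
  LinearMap.restrict (ExteriorAlgebra.map φ).toLinearMap
    (p := ⋀[k]^n V) (q := ⋀[k]^n V)
    (by
      intro x hx
      have hle : Submodule.map (ExteriorAlgebra.map φ).toLinearMap
          (LinearMap.range (ExteriorAlgebra.ι k (M := V)) ^ n) ≤
          LinearMap.range (ExteriorAlgebra.ι k (M := V)) ^ n := by
        rw [Submodule.map_pow]
        refine pow_le_pow_left' ?_ n
        rintro y ⟨z, ⟨v, rfl⟩, rfl⟩
        exact ⟨φ v, (ExteriorAlgebra.map_apply_ι φ v).symm⟩
      exact hle ⟨x, hx, rfl⟩)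

theorem extPowMap_eq_map (k : Type) [Field k] (V : Type) [AddCommGroup V] [Module k V]
    (n : ℕ) (φ : V →ₗ[k] V) : extPowMap k V n φ = exteriorPower.map n φ := by
  refine exteriorPower.linearMap_ext (AlternatingMap.ext fun v => Subtype.ext ?_)
  rw [LinearMap.compAlternatingMap_apply, LinearMap.compAlternatingMap_apply,
    exteriorPower.map_apply_ιMulti]
  exact ExteriorAlgebra.map_apply_ιMulti φ v

namespace exteriorPower

variable {R M ι : Type*} [CommRing R] [AddCommGroup M] [Module R M] [Fintype ι] [LinearOrder ι]

theorem toMatrix_basis_map_apply_self (b : Module.Basis ι R M) (n : ℕ) (f : M →ₗ[R] M)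
    (s : Set.powersetCard ι n) :
    LinearMap.toMatrix (b.exteriorPower n) (b.exteriorPower n) (map n f) s s =
      ((LinearMap.toMatrix b b f).submatrix (Subtype.val : s.val → ι) Subtype.val).det := by
  rw [LinearMap.toMatrix_apply, basis_apply, map_apply_ιMulti_family, basis_repr_apply,
    ιMulti_family, ιMultiDual_apply_ιMulti,
    ← Matrix.det_submatrix_equiv_self (Finset.orderIsoOfFin s.val s.prop).toEquiv,
    Matrix.submatrix_submatrix, ← Matrix.det_transpose]
  congr 1
  ext i j
  simp only [Matrix.transpose_apply, Matrix.submatrix_apply, Matrix.of_apply,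
    LinearMap.toMatrix_apply, Module.Basis.coord_apply, Function.comp_apply]
  rfl

theorem trace_map_eq_sum_det_submatrix (b : Module.Basis ι R M) (n : ℕ) (f : M →ₗ[R] M) :
    LinearMap.trace R (⋀[R]^n M) (map n f) =
      ∑ s ∈ Finset.univ.powersetCard n,
        ((LinearMap.toMatrix b b f).submatrix (Subtype.val : s → ι) Subtype.val).det := by
  rw [LinearMap.trace_eq_matrix_trace R (b.exteriorPower n), Matrix.trace,
    Finset.sum_subtype (p := (· ∈ Set.powersetCard ι n)) _ (by simp)]
  exact Fintype.sum_congr _ _ fun s => toMatrix_basis_map_apply_self b n f s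

end exteriorPower

theorem LinearMap.det_one_add_X_smul_baseChange {R M ι : Type*} [CommRing R] [AddCommGroup M]
    [Module R M] [Fintype ι] [DecidableEq ι] (b : Module.Basis ι R M) (f : M →ₗ[R] M) :
    LinearMap.det (1 + (X : R[X]) • f.baseChange R[X]) =
      (1 + (X : R[X]) • (LinearMap.toMatrix b b f).map C).det := by
  rw [← LinearMap.det_toMatrix (Algebra.TensorProduct.basis R[X] b), map_add, map_smul,
    LinearMap.toMatrix_one, LinearMap.toMatrix_baseChange, Polynomial.algebraMap_eq]

/-- for an endomorphism `φ` of an `m`-dimensional vector space `V` over a field `k`,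
`∑_{n=0}^{m} tr(Λ^n φ)·T^n = det(1 + T·φ)` in `k[T]`, where `det(1 + T·φ)` is the determinant of
the endomorphism `1 + T·φ` of `V ⊗ k[T]`. -/
theorem stmt_3 (k V : Type) [Field k] [AddCommGroup V] [Module k V] [FiniteDimensional k V]
    (φ : V →ₗ[k] V) :
    ∑ n ∈ Finset.range (Module.finrank k V + 1),
        Polynomial.C (LinearMap.trace k (⋀[k]^n V) (extPowMap k V n φ)) * Polynomial.X ^ n =
      LinearMap.det (1 + (Polynomial.X : Polynomial k) • LinearMap.baseChange (Polynomial k) φ) := by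
  let b := Module.finBasis k V
  rw [LinearMap.det_one_add_X_smul_baseChange b]
  ext n
  simp only [finsetSum_coeff, coeff_C_mul_X_pow, Matrix.coeff_det_one_add_X_smul_eq_sum_minors,
    extPowMap_eq_map, exteriorPower.trace_map_eq_sum_det_submatrix b, Finset.sum_ite_eq,
    ite_eq_left_iff]
  intro hn
  rw [Finset.powersetCard_eq_empty.2 (by simpa using hn), Finset.sum_empty]
end

section
/- Let q be a prime power and F_q the field with q elements. For n ≥ 2, the number of pairs (x, y) of elements of the ideal (t) in F_q[t]/(t^{n+1}) satisfying x·y = t^n in F_q[t]/(t^{n+1}) equals (n−1)(q−1)q^n. -/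
open Polynomial

/-- The truncated polynomial ring `F[t]/(t^{n+1})`. -/
abbrev TruncPoly (F : Type) [Field F] (n : ℕ) : Type :=
  Polynomial F ⧸ Ideal.span {(Polynomial.X : Polynomial F) ^ (n + 1)}

/-- The image of `t` in `F[t]/(t^{n+1})`. -/
noncomputable def tbar (F : Type) [Field F] (n : ℕ) : TruncPoly F n :=
  Ideal.Quotient.mk _ Polynomial.X

/-! In `R = F[t]/(t^{n+1})` every nonzero `x` is `u • tᵃ` for a unit `u` and a unique `a ≤ n`,
and `x, y ∈ (t)` with `x * y = tⁿ` forces `0 < a < n`. For each such `a` there are exactly `|Rˣ|`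
solutions with `x` in the orbit `Rˣ • tᵃ`: over each `x` of the orbit the admissible `y` form a
coset of the annihilator of `tᵃ`, and since `R` is local, `u ↦ 1 - u` identifies the stabilizer of
`tᵃ` with that annihilator, so orbit–stabilizer applies. Finally
`|Rˣ| = |R| - |(t)| = qⁿ⁺¹ - qⁿ`. -/

open IsLocalRing MulAction

theorem natCard_mul_eq_of_mem_orbit {R : Type*} [CommRing R] {x₀ y₀ x c : R}
    (h₀ : x₀ * y₀ = c) (hx : x ∈ orbit Rˣ x₀) :
    Nat.card {y : R // x * y = c} = Nat.card {s : R // s * x₀ = 0} := by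
  obtain ⟨u, rfl⟩ := hx
  refine Nat.card_congr (Equiv.subtypeEquiv ((Units.mulLeft u).trans (Equiv.subRight y₀)) ?_)
  intro y
  change u * x₀ * y = c ↔ (u * y - y₀) * x₀ = 0
  rw [← h₀]
  constructor <;> intro h <;> linear_combination h

section LocalRing

variable {R : Type*} [CommRing R] [IsLocalRing R]

theorem natCard_stabilizer_units {x : R} (hx : x ≠ 0) :
    Nat.card (stabilizer Rˣ x) = Nat.card {s : R // s * x = 0} := by
  have hs : ∀ s : R, s * x = 0 → IsUnit (1 - s) := fun s hs =>
    isUnit_one_sub_self_of_mem_nonunits s fun hu => hx (by simpa [hu.mul_right_eq_zero] using hs)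
  refine Nat.card_congr
    { toFun u := ⟨1 - (u : Rˣ), by
        have : ((u : Rˣ) : R) * x = x := u.2
        rw [sub_mul, one_mul, this, sub_self]⟩
      invFun s := ⟨(hs s s.2).unit, by
        change ((hs s s.2).unit : R) * x = x
        rw [IsUnit.unit_spec, sub_mul, s.2, one_mul, sub_zero]⟩
      left_inv u := Subtype.ext (Units.ext (sub_sub_cancel 1 _))
      right_inv s := Subtype.ext (sub_sub_cancel 1 _) }

theorem natCard_orbit_mul_eq [Finite R] {x₀ c : R} (hx₀ : x₀ ≠ 0) (hc : c ∈ Ideal.span {x₀}) :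
    Nat.card {p : R × R // p.1 ∈ orbit Rˣ x₀ ∧ p.1 * p.2 = c} = Nat.card Rˣ := by
  obtain ⟨y₀, hy₀⟩ := Ideal.mem_span_singleton.mp hc
  have := Fintype.ofFinite (orbit Rˣ x₀)
  have e : {p : R × R // p.1 ∈ orbit Rˣ x₀ ∧ p.1 * p.2 = c} ≃
      Σ x : orbit Rˣ x₀, {y : R // x * y = c} :=
    { toFun p := ⟨⟨p.1.1, p.2.1⟩, p.1.2, p.2.2⟩
      invFun q := ⟨(q.1, q.2), q.1.2, q.2.2⟩
      left_inv _ := rfl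
      right_inv _ := rfl }
  calc Nat.card {p : R × R // p.1 ∈ orbit Rˣ x₀ ∧ p.1 * p.2 = c}
      = ∑ x : orbit Rˣ x₀, Nat.card {y : R // x * y = c} := by
        rw [Nat.card_congr e, Nat.card_sigma]
    _ = ∑ _x : orbit Rˣ x₀, Nat.card (stabilizer Rˣ x₀) := by
      refine Finset.sum_congr rfl fun x _ => ?_
      rw [natCard_mul_eq_of_mem_orbit hy₀.symm x.2, natCard_stabilizer_units hx₀]
    _ = Nat.card Rˣ := by
      rw [Finset.sum_const, Finset.card_univ, smul_eq_mul, ← Nat.card_eq_fintype_card,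
        ← Nat.card_prod, Nat.card_congr (orbitProdStabilizerEquivGroup Rˣ x₀)]

theorem natCard_units_add_natCard_maximalIdeal [Finite R] :
    Nat.card Rˣ + Nat.card (maximalIdeal R) = Nat.card R := by
  classical
  have e : Rˣ ≃ {x : R // x ∉ maximalIdeal R} :=
    { toFun u := ⟨u, notMem_maximalIdeal.mpr u.isUnit⟩
      invFun x := (notMem_maximalIdeal.mp x.2).unit
      left_inv _ := Units.ext rfl
      right_inv _ := Subtype.ext rfl }
  rw [Nat.card_congr e, add_comm, ← Nat.card_sum]
  exact Nat.card_congr (Equiv.sumCompl _)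

end LocalRing

section ChainRing

variable {R : Type*} [CommRing R] [IsLocalRing R] {t : R} {n : ℕ}

theorem exists_le_mem_orbit_pow (ht : maximalIdeal R = Ideal.span {t}) (htn : t ^ (n + 1) = 0)
    {x : R} (hx : x ≠ 0) : ∃ a ≤ n, x ∈ orbit Rˣ (t ^ a) := by
  classical
  -- `a` is the largest exponent with `tᵃ ∣ x`, so the cofactor `y` cannot lie in `(t)`.
  obtain ⟨a, han, ⟨y, rfl⟩, hmax⟩ : ∃ a ≤ n, t ^ a ∣ x ∧ ∀ b, a < b → b ≤ n → ¬t ^ b ∣ x :=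
    ⟨_, Nat.findGreatest_le n, Nat.findGreatest_spec (P := (t ^ · ∣ x)) (Nat.zero_le n) (by simp),
      fun _ => Nat.findGreatest_is_greatest⟩
  suffices hy : IsUnit y from ⟨a, han, mem_orbit_iff.mpr
    ⟨hy.unit, by rw [Units.smul_def, IsUnit.unit_spec, smul_eq_mul, mul_comm]⟩⟩
  rw [← notMem_maximalIdeal, ht, Ideal.mem_span_singleton]
  rintro ⟨z, rfl⟩
  have hdvd : t ^ (a + 1) ∣ t ^ a * (t * z) := ⟨z, by ring⟩
  rcases han.lt_or_eq with han | han
  · exact hmax (a + 1) (Nat.lt_succ_self a) han hdvd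
  · exact hx (by rw [← mul_assoc, ← pow_succ, han, htn, zero_mul])

theorem eq_of_mem_orbit_pow (ht : maximalIdeal R = Ideal.span {t}) (htn : t ^ n ≠ 0)
    {a b : ℕ} (ha : a ≤ n) (hb : b ≤ n) {x : R}
    (hxa : x ∈ orbit Rˣ (t ^ a)) (hxb : x ∈ orbit Rˣ (t ^ b)) : a = b := by
  wlog hab : a < b generalizing a b
  · rcases (not_lt.mp hab).lt_or_eq with hba | hba
    · exact (this hb ha hxb hxa hba).symm
    · exact hba.symm
  obtain ⟨u, rfl⟩ := mem_orbit_iff.mp hxa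
  obtain ⟨v, hv⟩ := mem_orbit_iff.mp hxb
  rw [Units.smul_def, Units.smul_def, smul_eq_mul, smul_eq_mul] at hv
  have hw : (v : R) * t ^ (b - a) ∈ maximalIdeal R :=
    Ideal.mul_mem_left _ _ (Ideal.pow_mem_of_mem _ (ht ▸ Ideal.mem_span_singleton_self t) _
      (Nat.sub_pos_of_lt hab))
  have hunit : IsUnit ((u : R) - v * t ^ (b - a)) := notMem_maximalIdeal.mp fun h =>
    notMem_maximalIdeal.mpr u.isUnit (by simpa using add_mem h hw)
  have hzero : ((u : R) - v * t ^ (b - a)) * t ^ a = 0 := by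
    rw [sub_mul, mul_assoc, ← pow_add, Nat.sub_add_cancel hab.le, hv, sub_self]
  exact absurd (pow_eq_zero_of_le ha (hunit.mul_right_eq_zero.mp hzero)) htn

theorem mem_span_and_mem_span_iff_mem_orbit_pow (ht : maximalIdeal R = Ideal.span {t})
    (htn : t ^ (n + 1) = 0) (htn' : t ^ n ≠ 0) {x y : R} (hxy : x * y = t ^ n) :
    x ∈ Ideal.span {t} ∧ y ∈ Ideal.span {t} ↔ ∃ a, 0 < a ∧ a < n ∧ x ∈ orbit Rˣ (t ^ a) := by
  constructor
  · rintro ⟨hx, hy⟩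
    obtain ⟨a, han, hxa⟩ := exists_le_mem_orbit_pow ht htn (x := x) (by rintro rfl; simp_all)
    obtain ⟨u, rfl⟩ := mem_orbit_iff.mp hxa
    refine ⟨a, Nat.pos_of_ne_zero ?_, han.lt_of_ne ?_, hxa⟩
    · rintro rfl
      rw [← ht, pow_zero, Units.smul_def, smul_eq_mul, mul_one] at hx
      exact notMem_maximalIdeal.mpr u.isUnit hx
    · rintro rfl
      obtain ⟨z, rfl⟩ := Ideal.mem_span_singleton'.mp hy
      apply htn'
      rw [← hxy, Units.smul_def, smul_eq_mul, mul_comm z, ← mul_assoc, mul_assoc _ _ t,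
        ← pow_succ, htn, mul_zero, zero_mul]
  · rintro ⟨a, ha0, han, hxa⟩
    obtain ⟨u, rfl⟩ := mem_orbit_iff.mp hxa
    refine ⟨?_, ?_⟩
    · exact Ideal.mul_mem_left _ _
        (Ideal.pow_mem_of_mem _ (Ideal.mem_span_singleton_self t) _ ha0)
    · rw [← ht, ← not_not (a := y ∈ _), notMem_maximalIdeal]
      intro hy
      refine han.ne (eq_of_mem_orbit_pow ht htn' han.le le_rfl ⟨u * hy.unit, ?_⟩ ⟨1, one_smul _ _⟩)
      change ((u * hy.unit : Rˣ) : R) * t ^ a = t ^ n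
      rw [← hxy, Units.smul_def, smul_eq_mul, Units.val_mul, IsUnit.unit_spec]
      ring

theorem natCard_pairs_mul_eq_pow [Finite R] (ht : maximalIdeal R = Ideal.span {t})
    (htn : t ^ (n + 1) = 0) (htn' : t ^ n ≠ 0) :
    Nat.card {p : R × R // p.1 ∈ Ideal.span {t} ∧ p.2 ∈ Ideal.span {t} ∧ p.1 * p.2 = t ^ n} =
      (n - 1) * Nat.card Rˣ := by
  -- `a : Fin (n - 1)` stands for the exponent `a + 1`, which ranges over `1, …, n - 1`.
  let Φ : (Σ a : Fin (n - 1),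
      {p : R × R // p.1 ∈ orbit Rˣ (t ^ ((a : ℕ) + 1)) ∧ p.1 * p.2 = t ^ n}) →
      {p : R × R // p.1 ∈ Ideal.span {t} ∧ p.2 ∈ Ideal.span {t} ∧ p.1 * p.2 = t ^ n} :=
    fun q => ⟨q.2, and_assoc.mp ⟨(mem_span_and_mem_span_iff_mem_orbit_pow ht htn htn' q.2.2.2).mpr
      ⟨q.1 + 1, by omega, by omega, q.2.2.1⟩, q.2.2.2⟩⟩
  have hΦ : Function.Bijective Φ := by
    refine ⟨fun q q' h => ?_, fun p => ?_⟩
    · have hp : q.2.1 = q'.2.1 := congrArg Subtype.val h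
      refine Sigma.subtype_ext (Fin.ext ?_) hp
      have := eq_of_mem_orbit_pow ht htn' (by omega) (by omega) q.2.2.1 (hp ▸ q'.2.2.1)
      omega
    · obtain ⟨a, ha0, han, hxa⟩ :=
        (mem_span_and_mem_span_iff_mem_orbit_pow ht htn htn' p.2.2.2).mp ⟨p.2.1, p.2.2.1⟩
      refine ⟨⟨⟨a - 1, by omega⟩, p.1, ?_, p.2.2.2⟩, rfl⟩
      rwa [Nat.sub_add_cancel ha0]
  rw [← Nat.card_congr (Equiv.ofBijective Φ hΦ), Nat.card_sigma,
    Finset.sum_congr rfl fun a _ => natCard_orbit_mul_eq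
      (fun h => htn' (pow_eq_zero_of_le (by omega) h))
      (Ideal.mem_span_singleton.mpr (pow_dvd_pow t (by omega))),
    Finset.sum_const, Finset.card_univ, Fintype.card_fin, smul_eq_mul]

end ChainRing

namespace TruncPoly

variable (F : Type) [Field F] (n : ℕ)

noncomputable def constantCoeff : TruncPoly F n →+* F :=
  Ideal.Quotient.lift _ Polynomial.constantCoeff fun p hp => by
    obtain ⟨q, rfl⟩ := Ideal.mem_span_singleton.mp hp
    simp [pow_succ, mul_assoc]

variable {F n}

@[simp]
theorem constantCoeff_mk (p : F[X]) : constantCoeff F n (Ideal.Quotient.mk _ p) = p.coeff 0 :=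
  rfl

theorem constantCoeff_surjective : Function.Surjective (constantCoeff F n) :=
  fun c => ⟨Ideal.Quotient.mk _ (C c), by simp⟩

theorem ker_constantCoeff : RingHom.ker (constantCoeff F n) = Ideal.span {tbar F n} := by
  refine le_antisymm (fun x hx => ?_) ?_
  · obtain ⟨p, rfl⟩ := Ideal.Quotient.mk_surjective x
    obtain ⟨q, rfl⟩ := X_dvd_iff.mpr hx
    exact Ideal.mem_span_singleton.mpr ⟨Ideal.Quotient.mk _ q, map_mul _ _ _⟩
  · rw [Ideal.span_le, Set.singleton_subset_iff, SetLike.mem_coe, RingHom.mem_ker, tbar,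
      constantCoeff_mk, coeff_X_zero]

theorem tbar_pow_succ : tbar F n ^ (n + 1) = 0 := by
  rw [tbar, ← map_pow, Ideal.Quotient.eq_zero_iff_mem]
  exact Ideal.mem_span_singleton_self _

theorem tbar_pow_ne_zero : tbar F n ^ n ≠ 0 := by
  rw [tbar, ← map_pow, Ne, Ideal.Quotient.eq_zero_iff_mem, Ideal.mem_span_singleton]
  intro h
  simpa using natDegree_le_of_dvd h (pow_ne_zero _ X_ne_zero)

theorem nilradical_eq_ker : nilradical (TruncPoly F n) = RingHom.ker (constantCoeff F n) := by
  refine le_antisymm (fun x hx => ((mem_nilradical.mp hx).map (constantCoeff F n)).eq_zero) ?_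
  rw [ker_constantCoeff, Ideal.span_le, Set.singleton_subset_iff]
  exact mem_nilradical.mpr ⟨n + 1, tbar_pow_succ⟩

instance : (nilradical (TruncPoly F n)).IsMaximal :=
  nilradical_eq_ker (F := F) (n := n) ▸
    RingHom.ker_isMaximal_of_surjective _ constantCoeff_surjective

instance : IsLocalRing (TruncPoly F n) := .of_isMaximal_nilradical _

theorem maximalIdeal_eq_ker : maximalIdeal (TruncPoly F n) = RingHom.ker (constantCoeff F n) :=
  (eq_maximalIdeal
    (RingHom.ker_isMaximal_of_surjective (constantCoeff F n) constantCoeff_surjective)).symm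

theorem maximalIdeal_eq_span : maximalIdeal (TruncPoly F n) = Ideal.span {tbar F n} :=
  maximalIdeal_eq_ker.trans ker_constantCoeff

noncomputable def equivFun : TruncPoly F n ≃ₗ[F] (Fin (n + 1) → F) :=
  (AdjoinRoot.powerBasis' (monic_X_pow (n + 1))).basis.equivFun.trans
    (LinearEquiv.funCongrLeft F F (finCongr (by simp)))

theorem natCard : Nat.card (TruncPoly F n) = Nat.card F ^ (n + 1) := by
  rw [Nat.card_congr equivFun.toEquiv, Nat.card_fun, Nat.card_fin]

variable [Finite F]

instance : Finite (TruncPoly F n) := .of_equiv _ equivFun.symm.toEquiv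

theorem natCard_maximalIdeal : Nat.card (maximalIdeal (TruncPoly F n)) = Nat.card F ^ n := by
  have h := (maximalIdeal (TruncPoly F n)).card_eq_card_quotient_mul_card
  rw [Nat.card_congr ((Ideal.quotEquivOfEq maximalIdeal_eq_ker).trans
    (RingHom.quotientKerEquivOfSurjective constantCoeff_surjective)).toEquiv, natCard,
    pow_succ] at h
  exact (Nat.eq_of_mul_eq_mul_right Nat.card_pos h).symm

theorem natCard_units : Nat.card (TruncPoly F n)ˣ = (Nat.card F - 1) * Nat.card F ^ n := by
  have h := natCard_units_add_natCard_maximalIdeal (R := TruncPoly F n)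
  rw [natCard_maximalIdeal, natCard] at h
  rw [Nat.sub_one_mul]
  exact Nat.eq_sub_of_add_eq (h.trans (pow_succ' _ _))

end TruncPoly

theorem stmt_7_general (F : Type) [Field F] [Fintype F] (n : ℕ) :
    Nat.card {p : TruncPoly F n × TruncPoly F n //
        p.1 ∈ Ideal.span {tbar F n} ∧ p.2 ∈ Ideal.span {tbar F n} ∧
        p.1 * p.2 = tbar F n ^ n} =
      (n - 1) * (Fintype.card F - 1) * Fintype.card F ^ n := by
  rw [natCard_pairs_mul_eq_pow TruncPoly.maximalIdeal_eq_span TruncPoly.tbar_pow_succ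
    TruncPoly.tbar_pow_ne_zero, TruncPoly.natCard_units, Nat.card_eq_fintype_card, mul_assoc]

/-- for a finite field `F` with `q` elements and `n ≥ 2`, the number of pairs
`(x, y)` of elements of the ideal `(t)` of `F[t]/(t^{n+1})` with `x·y = tⁿ` equals
`(n-1)(q-1)qⁿ`. -/
theorem stmt_7 (F : Type) [Field F] [Fintype F] (n : ℕ) (hn : 2 ≤ n) :
    Nat.card {p : TruncPoly F n × TruncPoly F n //
        p.1 ∈ Ideal.span {tbar F n} ∧ p.2 ∈ Ideal.span {tbar F n} ∧
        p.1 * p.2 = tbar F n ^ n} =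
      (n - 1) * (Fintype.card F - 1) * Fintype.card F ^ n :=
  stmt_7_general F n
end

section
/- Let k be a field, and let A ⊆ B be commutative k-algebras such that the quotient B/A is a finite-dimensional k-vector space. Let g ∈ A be an element which is a non-zerodivisor in B and such that B/gB is a finite-dimensional k-vector space. Then A/gA is finite-dimensional over k and dim_k(A/gA) = dim_k(B/gB). -/
/-!
Compare both quotients with `B/gA`, which carries the chains `gA ⊆ A ⊆ B` and `gA ⊆ gB ⊆ B`.
As `g` is a non-zerodivisor, multiplication by `g` maps `B/A` isomorphically onto `gB/gA`, so
additivity of length gives `ℓ(A/gA) + ℓ(B/A) = ℓ(B/gA) = ℓ(B/A) + ℓ(B/gB)`, and `ℓ(B/A) < ∞`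
cancels. Working with `ℕ∞`-valued length makes the finiteness of `A/gA` part of the same identity.
-/

open LinearMap Submodule

section

variable {R M N : Type*} [Ring R] [AddCommGroup M] [Module R M] [AddCommGroup N] [Module R N]

theorem Module.length_quotient_map_of_injective (f : M →ₗ[R] N) (hf : Function.Injective f)
    (p : Submodule R M) :
    Module.length R (N ⧸ p.map f) = Module.length R (M ⧸ p) + Module.length R (N ⧸ range f) := by
  refine Module.length_eq_add_of_exact (p.mapQ (p.map f) f (le_comap_map f p))
    (factor (map_le_range (f := f))) ?_ (factor_surjective _) ?_
  · rw [← ker_eq_bot, ker_mapQ, comap_map_eq_of_injective hf, mkQ_map_self]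
  · rw [exact_iff]; simp [factor, ker_mapQ, range_mapQ]

theorem Module.length_quotient_range_eq_of_comp_eq {U V : Type*}
    [AddCommGroup U] [Module R U] [AddCommGroup V] [Module R V]
    (i : U →ₗ[R] V) (φ : V →ₗ[R] V) (ψ : U →ₗ[R] U)
    (hi : Function.Injective i) (hφ : Function.Injective φ) (h : φ ∘ₗ i = i ∘ₗ ψ)
    (hfin : Module.length R (V ⧸ range i) ≠ ⊤) :
    Module.length R (U ⧸ range ψ) = Module.length R (V ⧸ range φ) := by
  have hW : (range i).map φ = (range ψ).map i := by rw [← range_comp, ← range_comp, h]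
  have := length_quotient_map_of_injective φ hφ (range i)
  rw [hW, length_quotient_map_of_injective i hi, add_comm] at this
  exact WithTop.add_left_cancel hfin this

end

theorem Module.length_ne_top_iff_finite {K M : Type*} [DivisionRing K] [AddCommGroup M]
    [Module K M] : Module.length K M ≠ ⊤ ↔ Module.Finite K M := by
  rw [length_eq_rank, Ne, Cardinal.toENat_eq_top, not_le, rank_lt_aleph0_iff]

theorem Ideal.length_quotient_span_singleton_eq_range_mulRight {k S : Type*} [CommRing k] [CommRing S]
    [Algebra k S] (s : S) :
    Module.length k (S ⧸ Ideal.span {s}) = Module.length k (S ⧸ range (mulRight k s)) := by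
  have : (Ideal.span {s}).restrictScalars k = range (mulRight k s) := by
    ext; simp [Ideal.mem_span_singleton']
  rw [← (Submodule.Quotient.restrictScalarsEquiv k (Ideal.span {s})).length_eq, this]

/-- let `A ⊆ B` be commutative `k`-algebras with `B/A` finite-dimensional over
`k`, and let `g ∈ A` be a non-zerodivisor in `B` with `B/gB` finite-dimensional over `k`.
Then `A/gA` is finite-dimensional over `k` and `dim_k A/gA = dim_k B/gB`. -/
theorem stmt_11 (k : Type) [Field k] (B : Type) [CommRing B] [Algebra k B]
    (A : Subalgebra k B) (g : A)
    (hBA : FiniteDimensional k (B ⧸ Subalgebra.toSubmodule A))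
    (hreg : ∀ b : B, b * (g : B) = 0 → b = 0)
    (hBg : FiniteDimensional k (B ⧸ Ideal.span {(g : B)})) :
    FiniteDimensional k (A ⧸ Ideal.span {g}) ∧
      Module.finrank k (A ⧸ Ideal.span {g}) =
        Module.finrank k (B ⧸ Ideal.span {(g : B)}) := by
  have hrange : range A.val.toLinearMap = Subalgebra.toSubmodule A := by ext; simp
  have hlen :
      Module.length k (A ⧸ Ideal.span {g}) = Module.length k (B ⧸ Ideal.span {(g : B)}) := by
    simp only [Ideal.length_quotient_span_singleton_eq_range_mulRight]
    refine Module.length_quotient_range_eq_of_comp_eq A.val.toLinearMap _ _ Subtype.val_injective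
      (ker_eq_bot.mp (ker_eq_bot'.mpr hreg)) rfl ?_
    rwa [hrange, Module.length_ne_top_iff_finite]
  have hfin : FiniteDimensional k (A ⧸ Ideal.span {g}) :=
    Module.length_ne_top_iff_finite.mp (hlen ▸ Module.length_ne_top_iff_finite.mpr hBg)
  refine ⟨hfin, ?_⟩
  rw [Module.length_eq_finrank, Module.length_eq_finrank] at hlen
  exact_mod_cast hlen
end

section
/- Let k be a field, R = k[[x,y]]/(xy), and let α, β ∈ k be nonzero scalars and a, b ≥ 1 integers. Then the principal ideal I = (α·x^a + β·y^b) of R contains x^{a+1} and y^{b+1}, and I equals the ideal generated by the three elements α·x^a + β·y^b, x^{a+1}, y^{b+1}; moreover dim_k R/I = a + b. -/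
set_option synthInstance.maxHeartbeats 1000000
set_option maxHeartbeats 1000000
/-- The local ring `R = k[[x,y]]/(xy)` of the nodal plane curve singularity. -/
abbrev NodeRing (k : Type) [Field k] : Type :=
  MvPowerSeries (Fin 2) k ⧸
    Ideal.span {(MvPowerSeries.X 0 : MvPowerSeries (Fin 2) k) * MvPowerSeries.X 1}

/-- The image of `x` in `k[[x,y]]/(xy)`. -/
noncomputable def nodeX (k : Type) [Field k] : NodeRing k :=
  Ideal.Quotient.mk _ (MvPowerSeries.X 0)

/-- The image of `y` in `k[[x,y]]/(xy)`. -/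
noncomputable def nodeY (k : Type) [Field k] : NodeRing k :=
  Ideal.Quotient.mk _ (MvPowerSeries.X 1)

/-!
The quotient `R/(g)`, `g = α x^a + β y^b`, is computed upstairs in `k[[x,y]]`, where the kernel
of `k[[x,y]] → R/(g)` is `(xy, g)`. Since `x g = α x^{a+1}` and `y g = β y^{b+1}` in `R`, this
kernel contains the monomial ideal `(x^{a+1}, y^{b+1}, xy)`, whose complement is spanned by
`1, x, …, x^a, y, …, y^b`. Modulo `g` only the relation `α x^a + β y^b = 0` among these survives,
so the kernel is cut out by `a + b` independent linear conditions on the coefficients.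
-/

namespace MvPowerSeries

variable {σ R : Type*}

theorem monomial_one_dvd_of_coeff_eq_zero [Semiring R] {e : σ →₀ ℕ} {φ : MvPowerSeries σ R}
    (h : ∀ m, ¬ e ≤ m → coeff m φ = 0) : monomial e (1 : R) ∣ φ := by
  let ψ : MvPowerSeries σ R := fun m => coeff (m + e) φ
  have hψ (m : σ →₀ ℕ) : coeff m ψ = coeff (m + e) φ := rfl
  refine ⟨ψ, ext fun m => ?_⟩
  rw [coeff_monomial_mul]
  split_ifs with hm
  · rw [one_mul, hψ, tsub_add_cancel_of_le hm]
  · exact h m hm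

theorem mem_span_monomial_of_coeff_eq_zero [CommSemiring R] (s : Finset (σ →₀ ℕ))
    (φ : MvPowerSeries σ R) (h : ∀ m, (∀ e ∈ s, ¬ e ≤ m) → coeff m φ = 0) :
    φ ∈ Ideal.span ((monomial · (1 : R)) '' s) := by
  classical
  induction s using Finset.induction_on generalizing φ with
  | empty => exact (ext fun m => h m (by simp)) ▸ zero_mem _
  | insert e s _ ih =>
    let φ₁ : MvPowerSeries σ R := fun m => if e ≤ m then coeff m φ else 0
    let φ₂ : MvPowerSeries σ R := fun m => if e ≤ m then 0 else coeff m φ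
    have hφ₁ (m : σ →₀ ℕ) : coeff m φ₁ = if e ≤ m then coeff m φ else 0 := rfl
    have hφ₂ (m : σ →₀ ℕ) : coeff m φ₂ = if e ≤ m then 0 else coeff m φ := rfl
    have hφ : φ = φ₁ + φ₂ := by
      ext m
      rw [map_add, hφ₁, hφ₂]
      split_ifs <;> simp
    rw [Finset.coe_insert, Set.image_insert_eq, Ideal.span_insert, hφ]
    refine Submodule.add_mem_sup (Ideal.mem_span_singleton.2 ?_) (ih _ fun m hm => ?_)
    · exact monomial_one_dvd_of_coeff_eq_zero fun m hm => by rw [hφ₁, if_neg hm]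
    · rw [hφ₂]
      split_ifs with he
      · rfl
      · exact h m (by simpa [he] using hm)

theorem monomial_single_eq_C_mul_X_pow [CommSemiring R] (s : σ) (n : ℕ) (c : R) :
    monomial (Finsupp.single s n) c = C c * X s ^ n := by
  rw [X_pow_eq, ← monomial_zero_eq_C, monomial_mul_monomial, zero_add, mul_one]

theorem mem_span_X_pow_X_pow_X_mul_X [CommSemiring R] {a b : ℕ} {φ : MvPowerSeries (Fin 2) R}
    (hx : ∀ i ≤ a, coeff (Finsupp.single 0 i) φ = 0)
    (hy : ∀ j ≤ b, coeff (Finsupp.single 1 j) φ = 0) :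
    φ ∈ Ideal.span {X 0 ^ (a + 1), X 1 ^ (b + 1), X 0 * X 1} := by
  have hspan := mem_span_monomial_of_coeff_eq_zero
    {Finsupp.single 0 (a + 1), Finsupp.single 1 (b + 1), Finsupp.single 0 1 + Finsupp.single 1 1}
    φ fun m hm => ?_
  · rw [X_pow_eq, X_pow_eq, X_def, X_def, monomial_mul_monomial, mul_one]
    simpa only [Finset.coe_insert, Finset.coe_singleton, Set.image_insert_eq,
      Set.image_singleton] using hspan
  · obtain ⟨hma, hmb, hm0⟩ : m 0 ≤ a ∧ m 1 ≤ b ∧ (m 0 = 0 ∨ m 1 = 0) := by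
      simp [Finsupp.le_def, Fin.forall_fin_two] at hm
      omega
    obtain h1 | h0 := hm0.symm
    · have : m = Finsupp.single 0 (m 0) := by ext i; fin_cases i <;> simp [h1]
      exact this ▸ hx _ hma
    · have : m = Finsupp.single 1 (m 1) := by ext i; fin_cases i <;> simp [h0]
      exact this ▸ hy _ hmb

end MvPowerSeries

section

variable {A : Type*} [CommRing A] {x y u v : A}

theorem left_pow_succ_mem_span_of_mul_eq_zero (hxy : x * y = 0) (hu : IsUnit u) (a : ℕ) {b : ℕ}
    (hb : b ≠ 0) : x ^ (a + 1) ∈ Ideal.span {u * x ^ a + v * y ^ b} := by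
  obtain ⟨b, rfl⟩ : ∃ c, b = c + 1 := ⟨b - 1, by omega⟩
  refine Ideal.mem_span_singleton'.2 ⟨↑hu.unit⁻¹ * x, ?_⟩
  linear_combination (x ^ (a + 1)) * hu.val_inv_mul + (↑hu.unit⁻¹ * v * y ^ b) * hxy

theorem right_pow_succ_mem_span_of_mul_eq_zero (hxy : x * y = 0) (hv : IsUnit v) {a : ℕ}
    (ha : a ≠ 0) (b : ℕ) : y ^ (b + 1) ∈ Ideal.span {u * x ^ a + v * y ^ b} := by
  rw [add_comm]
  exact left_pow_succ_mem_span_of_mul_eq_zero (by rwa [mul_comm]) hv b ha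

end

namespace NodeRing

open MvPowerSeries Finsupp

variable {k : Type} [Field k]

theorem nodeX_mul_nodeY : nodeX k * nodeY k = 0 := by
  rw [nodeX, nodeY, ← map_mul, Ideal.Quotient.eq_zero_iff_mem]
  exact Ideal.subset_span rfl

variable (α β : k) (a b : ℕ)

noncomputable def gen : NodeRing k :=
  algebraMap k (NodeRing k) α * nodeX k ^ a + algebraMap k (NodeRing k) β * nodeY k ^ b

noncomputable def genSeries : MvPowerSeries (Fin 2) k :=
  monomial (single 0 a) α + monomial (single 1 b) β

noncomputable def toQuotient :
    MvPowerSeries (Fin 2) k →ₐ[k] NodeRing k ⧸ Ideal.span {gen α β a b} :=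
  (Ideal.Quotient.mkₐ k _).comp (Ideal.Quotient.mkₐ k _)

/-- Coordinates of the class of `f` in `R/(g)`: the coefficients of `x^i` (`i < a`) and of `y^j`
(`0 < j < b`), and `α [y^b] f - β [x^a] f`, which vanishes on `g`. -/
noncomputable def coords :
    MvPowerSeries (Fin 2) k →ₗ[k] (Fin a → k) × (Fin (b - 1) → k) × k :=
  (LinearMap.pi fun i : Fin a => coeff (single 0 (i : ℕ))).prod
    ((LinearMap.pi fun j : Fin (b - 1) => coeff (single 1 (j + 1 : ℕ))).prod
      (α • coeff (single 1 b) - β • coeff (single 0 a)))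

variable {α β a b}

theorem nodeX_pow_succ_mem (hα : α ≠ 0) (hb : b ≠ 0) :
    nodeX k ^ (a + 1) ∈ Ideal.span {gen α β a b} :=
  left_pow_succ_mem_span_of_mul_eq_zero nodeX_mul_nodeY ((isUnit_iff_ne_zero.2 hα).map _) a hb

theorem nodeY_pow_succ_mem (hβ : β ≠ 0) (ha : a ≠ 0) :
    nodeY k ^ (b + 1) ∈ Ideal.span {gen α β a b} :=
  right_pow_succ_mem_span_of_mul_eq_zero nodeX_mul_nodeY ((isUnit_iff_ne_zero.2 hβ).map _) ha b

theorem mk_genSeries : Ideal.Quotient.mk _ (genSeries α β a b) = gen α β a b := by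
  simp only [genSeries, gen, monomial_single_eq_C_mul_X_pow, c_eq_algebraMap, map_add, map_mul,
    map_pow, Ideal.Quotient.mk_algebraMap, nodeX, nodeY]

theorem toQuotient_apply (f : MvPowerSeries (Fin 2) k) :
    toQuotient α β a b f = Ideal.Quotient.mk _ (Ideal.Quotient.mk _ f) :=
  rfl

theorem toQuotient_surjective : Function.Surjective (toQuotient α β a b) :=
  (Ideal.Quotient.mkₐ_surjective k _).comp (Ideal.Quotient.mkₐ_surjective k _)

theorem toQuotient_genSeries : toQuotient α β a b (genSeries α β a b) = 0 := by
  rw [toQuotient_apply, mk_genSeries, Ideal.Quotient.eq_zero_iff_mem]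
  exact Ideal.mem_span_singleton_self _

theorem toQuotient_X_zero : toQuotient α β a b (X 0) = Ideal.Quotient.mk _ (nodeX k) :=
  rfl

theorem toQuotient_X_one : toQuotient α β a b (X 1) = Ideal.Quotient.mk _ (nodeY k) :=
  rfl

theorem span_X_pow_X_pow_X_mul_X_le_ker (hα : α ≠ 0) (hβ : β ≠ 0) (ha : a ≠ 0)
    (hb : b ≠ 0) :
    Ideal.span {X 0 ^ (a + 1), X 1 ^ (b + 1), X 0 * X 1} ≤ RingHom.ker (toQuotient α β a b) := by
  simp only [Ideal.span_le, Set.insert_subset_iff, Set.singleton_subset_iff, SetLike.mem_coe,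
    RingHom.mem_ker, map_pow, map_mul, toQuotient_X_zero, toQuotient_X_one]
  rw [← map_pow, ← map_pow, ← map_mul, nodeX_mul_nodeY, map_zero,
    Ideal.Quotient.eq_zero_iff_mem, Ideal.Quotient.eq_zero_iff_mem]
  exact ⟨nodeX_pow_succ_mem hα hb, nodeY_pow_succ_mem hβ ha, rfl⟩

theorem coords_eq_zero_iff (f : MvPowerSeries (Fin 2) k) :
    coords α β a b f = 0 ↔
      (∀ i < a, coeff (single 0 i) f = 0) ∧ (∀ j, 0 < j → j < b → coeff (single 1 j) f = 0) ∧
        α * coeff (single 1 b) f = β * coeff (single 0 a) f := by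
  simp only [coords, LinearMap.prod_apply, Function.prod_apply, LinearMap.sub_apply,
    LinearMap.smul_apply, smul_eq_mul, Prod.mk_eq_zero, funext_iff, LinearMap.pi_apply,
    Pi.zero_apply, Fin.forall_iff, sub_eq_zero]
  refine and_congr Iff.rfl
    (and_congr ⟨fun h j hj hjb => ?_, fun h i hi => h _ (by omega) (by omega)⟩ Iff.rfl)
  obtain ⟨i, rfl⟩ : ∃ i, j = i + 1 := ⟨j - 1, by omega⟩
  exact h i (by omega)

theorem coords_surjective (hα : α ≠ 0) (hb : b ≠ 0) :
    Function.Surjective (coords α β a b) := by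
  classical
  rintro ⟨p, q, r⟩
  refine ⟨∑ i : Fin a, monomial (single 0 (i : ℕ)) (p i) +
    ∑ j : Fin (b - 1), monomial (single 1 (j + 1 : ℕ)) (q j) + monomial (single 1 b) (r / α),
    Prod.ext (funext fun i => ?_) (Prod.ext (funext fun j => ?_) ?_)⟩
  all_goals simp [coords, coeff_monomial, (single_injective _).eq_iff, single_eq_single_iff,
    Fin.val_inj, hb, mul_div_cancel₀ r hα, -single_add, fun i : Fin a => i.isLt.ne',
    fun j : Fin (b - 1) => (show b ≠ j + 1 by omega),
    fun j : Fin (b - 1) => (show j + 1 ≠ b by omega)]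

theorem coords_mul_X_mul_X (φ : MvPowerSeries (Fin 2) k) :
    coords α β a b (φ * (X 0 * X 1)) = 0 := by
  rw [coords_eq_zero_iff, X_def, X_def, monomial_mul_monomial, mul_one]
  simp [coeff_mul_monomial, le_def, Fin.forall_fin_two]

theorem coords_mul_genSeries (ha : a ≠ 0) (hb : b ≠ 0) (φ : MvPowerSeries (Fin 2) k) :
    coords α β a b (φ * genSeries α β a b) = 0 := by
  rw [coords_eq_zero_iff, genSeries, mul_add]
  refine ⟨fun i hi => ?_, fun j hj hjb => ?_, ?_⟩
  · simp [coeff_mul_monomial, single_le_iff, not_le.2 hi, hb]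
  · simp [coeff_mul_monomial, single_le_iff, not_le.2 hjb, ha]
  · simp [coeff_mul_monomial, single_le_iff, ha, hb, mul_comm, mul_left_comm]

theorem coords_eq_zero_of_toQuotient_eq_zero (ha : a ≠ 0) (hb : b ≠ 0)
    {f : MvPowerSeries (Fin 2) k} (hf : toQuotient α β a b f = 0) : coords α β a b f = 0 := by
  rw [toQuotient_apply, Ideal.Quotient.eq_zero_iff_mem, ← mk_genSeries,
    Ideal.mem_span_singleton'] at hf
  obtain ⟨r, hr⟩ := hf
  obtain ⟨u, rfl⟩ := Ideal.Quotient.mk_surjective r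
  rw [← map_mul, Ideal.Quotient.eq, Ideal.mem_span_singleton'] at hr
  obtain ⟨v, hv⟩ := hr
  rw [show f = u * genSeries α β a b - v * (X 0 * X 1) by rw [hv]; ring, map_sub,
    coords_mul_genSeries ha hb, coords_mul_X_mul_X, sub_zero]

theorem toQuotient_eq_zero_of_coords_eq_zero (hα : α ≠ 0) (hβ : β ≠ 0) (ha : a ≠ 0)
    (hb : b ≠ 0)
    {f : MvPowerSeries (Fin 2) k} (hf : coords α β a b f = 0) : toQuotient α β a b f = 0 := by
  obtain ⟨hx, hy, hxy⟩ := (coords_eq_zero_iff f).1 hf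
  -- subtracting `c • g` kills the coefficients of `x^a` and `y^b` (the latter thanks to `hxy`)
  set c := coeff (single 0 a) f / α
  have hx' (i : ℕ) (hi : i ≤ a) : coeff (single 0 i) (f - c • genSeries α β a b) = 0 := by
    rcases hi.lt_or_eq with hi | rfl
    · simp [genSeries, coeff_monomial, (single_injective _).eq_iff, single_eq_single_iff,
        hx i hi, hi.ne, hb]
    · simp [genSeries, coeff_monomial, single_eq_single_iff, c, hα, hb]
  have hy' (j : ℕ) (hj : j ≤ b) : coeff (single 1 j) (f - c • genSeries α β a b) = 0 := by
    rcases Nat.eq_zero_or_pos j with rfl | hj0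
    · simpa using hx' 0 (Nat.zero_le a)
    rcases hj.lt_or_eq with hj | rfl
    · simp [genSeries, coeff_monomial, (single_injective _).eq_iff, single_eq_single_iff,
        hy j hj0 hj, hj.ne, ha]
    · have hyb : coeff (single 1 j) f = coeff (single 0 a) f / α * β := by
        field_simp
        linear_combination hxy
      simp [genSeries, coeff_monomial, single_eq_single_iff, c, ha, hyb]
  have hrest : f - c • genSeries α β a b ∈ RingHom.ker (toQuotient α β a b) :=
    span_X_pow_X_pow_X_mul_X_le_ker hα hβ ha hb (mem_span_X_pow_X_pow_X_mul_X hx' hy')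
  rwa [RingHom.mem_ker, map_sub, map_smul, toQuotient_genSeries, smul_zero, sub_zero] at hrest

theorem finrank_quotient_span_gen (hα : α ≠ 0) (hβ : β ≠ 0) (ha : a ≠ 0) (hb : b ≠ 0) :
    Module.finrank k (NodeRing k ⧸ Ideal.span {gen α β a b}) = a + b := by
  have hker : LinearMap.ker (toQuotient α β a b).toLinearMap = LinearMap.ker (coords α β a b) :=
    Submodule.ext fun f => ⟨coords_eq_zero_of_toQuotient_eq_zero ha hb,
      toQuotient_eq_zero_of_coords_eq_zero hα hβ ha hb⟩
  let e :=
    ((toQuotient α β a b).toLinearMap.quotKerEquivOfSurjective toQuotient_surjective).symm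
    ≪≫ₗ Submodule.quotEquivOfEq _ _ hker
    ≪≫ₗ (coords α β a b).quotKerEquivOfSurjective (coords_surjective hα hb)
  rw [e.finrank_eq, Module.finrank_prod, Module.finrank_prod, Module.finrank_fin_fun,
    Module.finrank_fin_fun, Module.finrank_self]
  omega

end NodeRing

/-- in `R = k[[x,y]]/(xy)`, for nonzero `α, β ∈ k` and `a, b ≥ 1`, the principal
ideal `I = (α x^a + β y^b)` contains `x^{a+1}` and `y^{b+1}`, equals the ideal generated by
`α x^a + β y^b, x^{a+1}, y^{b+1}`, and `dim_k R/I = a + b`. -/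
theorem stmt_13 (k : Type) [Field k] (α β : k) (hα : α ≠ 0) (hβ : β ≠ 0) (a b : ℕ)
    (ha : 1 ≤ a) (hb : 1 ≤ b) :
    (nodeX k) ^ (a + 1) ∈
        Ideal.span {algebraMap k (NodeRing k) α * nodeX k ^ a +
          algebraMap k (NodeRing k) β * nodeY k ^ b} ∧
    (nodeY k) ^ (b + 1) ∈
        Ideal.span {algebraMap k (NodeRing k) α * nodeX k ^ a +
          algebraMap k (NodeRing k) β * nodeY k ^ b} ∧
    Ideal.span {algebraMap k (NodeRing k) α * nodeX k ^ a +
          algebraMap k (NodeRing k) β * nodeY k ^ b} =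
      Ideal.span {algebraMap k (NodeRing k) α * nodeX k ^ a +
          algebraMap k (NodeRing k) β * nodeY k ^ b,
        nodeX k ^ (a + 1), nodeY k ^ (b + 1)} ∧
    Module.finrank k (NodeRing k ⧸
        Ideal.span {algebraMap k (NodeRing k) α * nodeX k ^ a +
          algebraMap k (NodeRing k) β * nodeY k ^ b}) = a + b := by
  have hx : nodeX k ^ (a + 1) ∈ Ideal.span {NodeRing.gen α β a b} :=
    NodeRing.nodeX_pow_succ_mem hα (by omega)
  have hy : nodeY k ^ (b + 1) ∈ Ideal.span {NodeRing.gen α β a b} :=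
    NodeRing.nodeY_pow_succ_mem hβ (by omega)
  refine ⟨hx, hy, ?_, NodeRing.finrank_quotient_span_gen hα hβ (by omega) (by omega)⟩
  refine le_antisymm (Ideal.span_mono (Set.singleton_subset_iff.2 (Set.mem_insert _ _))) ?_
  simp only [Ideal.span_le, Set.insert_subset_iff, Set.singleton_subset_iff, SetLike.mem_coe]
  exact ⟨Ideal.mem_span_singleton_self _, hx, hy⟩
end

section
/- Let k be a field, R = k[[x,y]]/(xy), and let a, b ≥ 1 be integers. Then the ideal I = (x^{a+1}, y^b) of R is not principal: there is no g ∈ R with I = (g). -/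
set_option synthInstance.maxHeartbeats 1000000
set_option maxHeartbeats 1000000

/-!
Map `R` onto its two branches `k[[x]]` (kill `y`) and `k[[y]]` (kill `x`). If
`(x^{a+1}, y^b) = (g)`, then `g` is nonzero on both branches. Writing `x^{a+1} = u g`, the
image of `u` vanishes on the `y`-branch, because `x^{a+1}` does there. On the `x`-branch,
`g ∈ (x^{a+1})` makes `u` a unit. The two branches meet at the origin, so `u` has the same
constant term on both, which is impossible.
-/

theorem Ideal.span_pair_ne_span_singleton_of_ringHom {R S T : Type*} [CommRing R]
    [CommRing S] [IsDomain S] [CommRing T] [IsDomain T] (φ : R →+* S) (ψ : R →+* T)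
    (hφψ : ∀ u, IsUnit (φ u) → ψ u ≠ 0) {p q : R} (hφp : φ p ≠ 0) (hψp : ψ p = 0)
    (hφq : φ q = 0) (hψq : ψ q ≠ 0) (g : R) :
    Ideal.span {p, q} ≠ Ideal.span {g} := by
  intro hspan
  have hp : p ∈ Ideal.span {g} := hspan ▸ Ideal.subset_span (by simp)
  have hq : q ∈ Ideal.span {g} := hspan ▸ Ideal.subset_span (by simp)
  obtain ⟨s, t, hg⟩ := Ideal.mem_span_pair.mp (hspan ▸ Ideal.mem_span_singleton_self g)
  obtain ⟨u, rfl⟩ := Ideal.mem_span_singleton'.mp hp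
  obtain ⟨v, rfl⟩ := Ideal.mem_span_singleton'.mp hq
  have hφg : φ g ≠ 0 := right_ne_zero_of_mul (by simpa using hφp)
  have hψg : ψ g ≠ 0 := right_ne_zero_of_mul (by simpa using hψq)
  have hψu : ψ u = 0 := by simpa [hψg] using hψp
  have hφv : φ v = 0 := by simpa [hφg] using hφq
  have hφu : IsUnit (φ u) := by
    refine IsUnit.of_mul_eq_one (φ s) (mul_right_cancel₀ hφg ?_)
    simpa [hφv, mul_comm, mul_left_comm] using congrArg φ hg
  exact hφψ u hφu hψu

namespace MvPowerSeries

variable {σ R : Type*} [DecidableEq σ] [CommSemiring R]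

/-- Sets all variables other than `X i` to `0`. -/
noncomputable def axisRestriction (i : σ) : MvPowerSeries σ R →+* PowerSeries R where
  toFun f := PowerSeries.mk fun n => coeff (Finsupp.single i n) f
  map_one' := by ext n; simp [coeff_one, PowerSeries.coeff_one, Finsupp.single_eq_zero]
  map_mul' f g := by
    ext n
    simp only [PowerSeries.coeff_mul, PowerSeries.coeff_mk, coeff_mul,
      Finsupp.antidiagonal_single, Finset.sum_map]
    rfl
  map_zero' := by ext n; simp
  map_add' f g := by ext n; simp

theorem coeff_axisRestriction (i : σ) (f : MvPowerSeries σ R) (n : ℕ) :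
    PowerSeries.coeff n (axisRestriction i f) = coeff (Finsupp.single i n) f := by
  simp [axisRestriction]

theorem axisRestriction_X_self (i : σ) :
    axisRestriction i (X i : MvPowerSeries σ R) = PowerSeries.X := by
  ext n
  simp [coeff_axisRestriction, coeff_X, PowerSeries.coeff_X, Finsupp.single_eq_single_iff]

theorem axisRestriction_X_of_ne {i j : σ} (hij : i ≠ j) :
    axisRestriction i (X j : MvPowerSeries σ R) = 0 := by
  ext n
  simp [coeff_axisRestriction, coeff_X, Finsupp.single_eq_single_iff, hij]

theorem constantCoeff_axisRestriction (i : σ) (f : MvPowerSeries σ R) :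
    PowerSeries.constantCoeff (axisRestriction i f) = constantCoeff f := by
  simp [← PowerSeries.coeff_zero_eq_constantCoeff_apply, coeff_axisRestriction]

end MvPowerSeries

namespace NodeRing

variable (k : Type) [Field k]

/-- The branch `y = 0` (for `i = 0`) or `x = 0` (for `i = 1`) of the node. -/
noncomputable def branch (i : Fin 2) : NodeRing k →+* PowerSeries k :=
  Ideal.Quotient.lift _ (MvPowerSeries.axisRestriction i) fun f hf => by
    obtain ⟨c, rfl⟩ := Ideal.mem_span_singleton'.mp hf
    fin_cases i <;> simp [MvPowerSeries.axisRestriction_X_of_ne]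

@[simp]
theorem branch_mk (i : Fin 2) (f : MvPowerSeries (Fin 2) k) :
    branch k i (Ideal.Quotient.mk _ f) = MvPowerSeries.axisRestriction i f :=
  Ideal.Quotient.lift_mk _ _ _

@[simp]
theorem branch_zero_nodeX : branch k 0 (nodeX k) = PowerSeries.X := by
  simp [nodeX, MvPowerSeries.axisRestriction_X_self]

@[simp]
theorem branch_one_nodeX : branch k 1 (nodeX k) = 0 := by
  simp [nodeX, MvPowerSeries.axisRestriction_X_of_ne]

@[simp]
theorem branch_zero_nodeY : branch k 0 (nodeY k) = 0 := by
  simp [nodeY, MvPowerSeries.axisRestriction_X_of_ne]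

@[simp]
theorem branch_one_nodeY : branch k 1 (nodeY k) = PowerSeries.X := by
  simp [nodeY, MvPowerSeries.axisRestriction_X_self]

/-- Both branches pass through the node. -/
theorem constantCoeff_branch (i j : Fin 2) (u : NodeRing k) :
    PowerSeries.constantCoeff (branch k i u) = PowerSeries.constantCoeff (branch k j u) := by
  obtain ⟨f, rfl⟩ := Ideal.Quotient.mk_surjective u
  simp [MvPowerSeries.constantCoeff_axisRestriction]

theorem branch_ne_zero_of_isUnit_branch {i : Fin 2} (j : Fin 2) {u : NodeRing k}
    (hu : IsUnit (branch k i u)) : branch k j u ≠ 0 := by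
  rw [PowerSeries.isUnit_iff_constantCoeff, constantCoeff_branch k i j] at hu
  rintro hj
  simp [hj] at hu

end NodeRing

theorem stmt_14_general (k : Type) [Field k] (a b : ℕ) (hb : 1 ≤ b) :
    ¬ ∃ g : NodeRing k,
        Ideal.span {nodeX k ^ (a + 1), nodeY k ^ b} = Ideal.span {g} := by
  rintro ⟨g, hg⟩
  refine Ideal.span_pair_ne_span_singleton_of_ringHom (NodeRing.branch k 0) (NodeRing.branch k 1)
    (fun _ => NodeRing.branch_ne_zero_of_isUnit_branch k 1) ?_ ?_ ?_ ?_ g hg <;>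
    simp [PowerSeries.X_ne_zero, Nat.one_le_iff_ne_zero.mp hb]

/-- in `R = k[[x,y]]/(xy)`, for `a, b ≥ 1` the ideal `(x^{a+1}, y^b)` is not
principal. -/
theorem stmt_14 (k : Type) [Field k] (a b : ℕ) (ha : 1 ≤ a) (hb : 1 ≤ b) :
    ¬ ∃ g : NodeRing k,
        Ideal.span {nodeX k ^ (a + 1), nodeY k ^ b} = Ideal.span {g} :=
  stmt_14_general k a b hb
end
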